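/- Let n ≥ 1 and 0 ≤ k ≤ n be integers, and let τ be a form of bidegree (n−k, k) on ℝ^n × ℝ^n. Then τ is positive if and only if for every point (x,ξ) ∈ ℝ^n × ℝ^n and every positively oriented orthonormal basis e_1, …, e_n of ℝ^n one has τ_{(x,ξ)}((e_1,0), …, (e_{n−k},0), (0,e_{n−k+1}), …, (0,e_n)) ≥ 0. -/

import Mathlib

/-!
At a point `x`, the Hessian `H` of a convex `C²` function is a positive semidefinite symmetric
map; let `b` be an orthonormal eigenbasis, with eigenvalues `μᵢ ≥ 0`. Changing basis and
expanding multilinearly along `(bᵢ, μᵢ bᵢ) = (bᵢ, 0) + (0, μᵢ bᵢ)` gives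
`τ((εᵢ, H εᵢ))ᵢ = det b · ∑ₛ (∏_{i ∉ s} μᵢ) τ(Fₛ b)` for the standard basis `ε`, where `Fₛ b`
has `(bᵢ, 0)` at `i ∈ s` and `(0, bᵢ)` elsewhere; the bidegree condition kills every term with
`#s ≠ n - k`. Reordering `b` and possibly negating one of its vectors multiplies `det b` and
`τ(Fₛ b)` by the same sign, so `det b · τ(Fₛ b)` is a value of `τ` on one of the frames of the
hypothesis, hence nonnegative. Conversely, `y ↦ ⟪ξ, y⟫ + ½ ∑_{i ≥ n-k} ⟪eᵢ, y - x⟫²` has gradient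
`ξ` at `x` and Hessian the orthogonal projection onto `span {eᵢ | i ≥ n-k}`, and for it the
expansion collapses to the single frame of the hypothesis.
-/

noncomputable section

open scoped Classical

/-- `ℝⁿ` with its Euclidean structure. -/
abbrev En (n : ℕ) := EuclideanSpace ℝ (Fin n)

/-- A (continuous) form of bidegree `(n-k, k)` on `ℝⁿ × ℝⁿ`: a continuous assignment
of alternating `n`-linear forms on `ℝⁿ × ℝⁿ` vanishing whenever at least `n-k+1`
arguments lie in `ℝⁿ × {0}` or at least `k+1` arguments lie in `{0} × ℝⁿ`. -/
structure BidegreeForm (n k : ℕ) where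
  form : En n × En n → AlternatingMap ℝ (En n × En n) ℝ (Fin n)
  cont : ∀ v : Fin n → En n × En n, Continuous fun x => form x v
  vanish_fst : ∀ (x : En n × En n) (v : Fin n → En n × En n),
    n - k + 1 ≤ (Finset.univ.filter fun i => (v i).2 = 0).card → form x v = 0
  vanish_snd : ∀ (x : En n × En n) (v : Fin n → En n × En n),
    k + 1 ≤ (Finset.univ.filter fun i => (v i).1 = 0).card → form x v = 0

/-- The Hessian of `f` at `x`, applied to a vector `v`, obtained as the derivative of
the gradient map. -/
def hess {n : ℕ} (f : En n → ℝ) (x v : En n) : En n :=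
  fderiv ℝ (fun y => gradient f y) x v

/-- `τ` is a positive form: `G_f^* τ ≥ 0` for every convex `C²` function `f`, i.e.
`τ_{(x,∇f(x))}((e_1, D²f(x)e_1), …, (e_n, D²f(x)e_n)) ≥ 0` on the standard basis. -/
def IsPositiveForm {n k : ℕ} (τ : BidegreeForm n k) : Prop :=
  ∀ f : En n → ℝ, ConvexOn ℝ Set.univ f → ContDiff ℝ 2 f → ∀ x : En n,
    0 ≤ τ.form (x, gradient f x)
      (fun i => (EuclideanSpace.single i 1, hess f x (EuclideanSpace.single i 1)))

open Finset Matrix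
open scoped RealInnerProductSpace

lemma ContDiff.differentiable_gradient {E : Type*} [NormedAddCommGroup E]
    [InnerProductSpace ℝ E] [CompleteSpace E] {f : E → ℝ} (hf : ContDiff ℝ 2 f) :
    Differentiable ℝ (gradient f) :=
  (InnerProductSpace.toDual ℝ E).symm.toContinuousLinearEquiv.differentiable.comp
    ((hf.fderiv_right (m := 1) le_rfl).differentiable one_ne_zero)

section Hessian

variable {n : ℕ} {f : En n → ℝ}

lemma inner_hess_eq_fderiv_fderiv (hf : ContDiff ℝ 2 f) (x v w : En n) :
    ⟪hess f x v, w⟫ = fderiv ℝ (fderiv ℝ f) x v w := by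
  have hD : HasFDerivAt (fderiv ℝ f)
      ((InnerProductSpace.toDual ℝ (En n)).toContinuousLinearEquiv.toContinuousLinearMap.comp
        (fderiv ℝ (gradient f) x)) x := by
    rw [← toDual_comp_gradient]
    exact (InnerProductSpace.toDual ℝ (En n)).toContinuousLinearEquiv.hasFDerivAt.comp x
      (hf.differentiable_gradient x).hasFDerivAt
  rw [hD.fderiv]
  rfl

lemma inner_hess_comm (hf : ContDiff ℝ 2 f) (x v w : En n) :
    ⟪hess f x v, w⟫ = ⟪v, hess f x w⟫ := by
  rw [inner_hess_eq_fderiv_fderiv hf, real_inner_comm, inner_hess_eq_fderiv_fderiv hf]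
  exact (hf.contDiffAt.isSymmSndFDerivAt (by simp)) v w

lemma inner_hess_self_nonneg (hconv : ConvexOn ℝ Set.univ f) (hf : ContDiff ℝ 2 f)
    (x v : En n) : 0 ≤ ⟪hess f x v, v⟫ := by
  set line : ℝ →ᵃ[ℝ] En n := AffineMap.lineMap x (x + v)
  have hline : ∀ t, HasDerivAt line v t := fun t => by
    simpa [line] using AffineMap.hasDerivAt_lineMap (a := x) (b := x + v) (x := t)
  have hslope : ∀ t, HasDerivAt (f ∘ line) ⟪gradient f (line t), v⟫ t := fun t => by
    rw [inner_gradient_left]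
    exact ((hf.differentiable two_ne_zero) _).hasFDerivAt.comp_hasDerivAt t (hline t)
  have hmono : Monotone fun t => ⟪gradient f (line t), v⟫ := by
    have := (hconv.comp_affineMap line).monotoneOn_deriv
      fun t _ => (hslope t).differentiableAt
    simpa [funext fun t => (hslope t).deriv, monotoneOn_univ] using this
  have hderiv : HasDerivAt (fun t => ⟪gradient f (line t), v⟫) ⟪hess f x v, v⟫ 0 := by
    have := ((hf.differentiable_gradient _).hasFDerivAt.comp_hasDerivAt 0 (hline 0)).inner ℝ
      (hasDerivAt_const 0 v)
    simpa [line, hess] using this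
  exact hderiv.deriv ▸ hmono.deriv_nonneg

lemma ConvexOn.isPositive_fderiv_gradient (hconv : ConvexOn ℝ Set.univ f)
    (hf : ContDiff ℝ 2 f) (x : En n) :
    (fderiv ℝ (gradient f) x : En n →ₗ[ℝ] En n).IsPositive :=
  (LinearMap.isPositive_iff _).2
    ⟨fun v w => inner_hess_comm hf x v w, fun v => inner_hess_self_nonneg hconv hf x v⟩

end Hessian

lemma ConvexOn.fun_sum {E ι : Type*} [AddCommGroup E] [Module ℝ E] {t : Set E} (ht : Convex ℝ t)
    {s : Finset ι} {g : ι → E → ℝ} (hg : ∀ i ∈ s, ConvexOn ℝ t (g i)) :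
    ConvexOn ℝ t fun y => ∑ i ∈ s, g i y := by
  rw [← Finset.sum_fn]
  exact Finset.sum_induction g (ConvexOn ℝ t) (fun _ _ => .add) (convexOn_const 0 ht) hg

section TestQuadratic

variable {E ι : Type*} [NormedAddCommGroup E] [InnerProductSpace ℝ E]

def testQuadratic (x ξ : E) (s : Finset ι) (u : ι → E) (y : E) : ℝ :=
  ⟪ξ, y⟫ + 2⁻¹ * ∑ i ∈ s, ⟪u i, y - x⟫ ^ 2

variable (x ξ : E) (s : Finset ι) (u : ι → E)

lemma convexOn_testQuadratic : ConvexOn ℝ Set.univ (testQuadratic x ξ s u) := by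
  refine ((innerₛₗ ℝ ξ).convexOn convex_univ).add <| .smul (by norm_num) <|
    .fun_sum convex_univ fun i _ => ?_
  have := ((Even.convexOn_pow (𝕜 := ℝ) even_two).comp_linearMap
    (innerₛₗ ℝ (u i))).translate_right (-x)
  simpa [Function.comp_def, ← sub_eq_neg_add] using this

lemma contDiff_testQuadratic : ContDiff ℝ 2 (testQuadratic x ξ s u) :=
  (contDiff_const.inner ℝ contDiff_id).add <| contDiff_const.mul <| .sum fun _ _ =>
    (contDiff_const.inner ℝ (contDiff_id.sub contDiff_const)).pow 2

lemma hasGradientAt_testQuadratic [CompleteSpace E] (y : E) :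
    HasGradientAt (testQuadratic x ξ s u) (ξ + ∑ i ∈ s, ⟪u i, y - x⟫ • u i) y := by
  have hsq : ∀ i, HasFDerivAt (fun y => ⟪u i, y - x⟫ ^ 2)
      ((2 * ⟪u i, y - x⟫) • innerSL ℝ (u i)) y := fun i => by
    simpa using ((innerSL ℝ (u i)).hasFDerivAt.comp y ((hasFDerivAt_id y).sub_const x)).pow 2
  rw [hasGradientAt_iff_hasFDerivAt]
  refine ((innerSL ℝ ξ).hasFDerivAt.fun_add
    ((HasFDerivAt.fun_sum (u := s) fun i _ => hsq i).const_mul 2⁻¹)).congr_fderiv ?_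
  ext v
  simp [Finset.mul_sum, ← mul_assoc]

lemma gradient_testQuadratic [CompleteSpace E] :
    gradient (testQuadratic x ξ s u) = fun y => ξ + ∑ i ∈ s, ⟪u i, y - x⟫ • u i :=
  gradient_eq (hasGradientAt_testQuadratic x ξ s u)

lemma gradient_testQuadratic_self [CompleteSpace E] : gradient (testQuadratic x ξ s u) x = ξ := by
  simp [gradient_testQuadratic]

lemma hasFDerivAt_gradient_testQuadratic [CompleteSpace E] (y : E) :
    HasFDerivAt (gradient (testQuadratic x ξ s u))
      (∑ i ∈ s, (innerSL ℝ (u i)).smulRight (u i)) y := by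
  rw [gradient_testQuadratic]
  refine ((HasFDerivAt.fun_sum (u := s) fun i _ =>
    (((innerSL ℝ (u i)).hasFDerivAt.comp y ((hasFDerivAt_id y).sub_const x)).smul_const
      (u i))).const_add ξ).congr_fderiv ?_
  ext v
  simp

end TestQuadratic

lemma hess_testQuadratic {n : ℕ} {ι : Type*} (x ξ : En n) (s : Finset ι) (u : ι → En n)
    (v : En n) : hess (testQuadratic x ξ s u) x v = ∑ i ∈ s, ⟪u i, v⟫ • u i := by
  simp [hess, (hasFDerivAt_gradient_testQuadratic x ξ s u x).fderiv]

lemma Orthonormal.sum_inner_smul_eq_ite {E ι : Type*} [NormedAddCommGroup E]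
    [InnerProductSpace ℝ E] [DecidableEq ι] {e : ι → E} (he : Orthonormal ℝ e) (t : Finset ι)
    (j : ι) : ∑ i ∈ t, ⟪e i, e j⟫ • e i = if j ∈ t then e j else 0 := by
  simp [orthonormal_iff_ite.1 he, ite_smul]

section MixedFrame

variable {ι E : Type*} [DecidableEq ι] [AddCommGroup E]

def mixedFrame (e : ι → E) (s : Finset ι) (i : ι) : E × E :=
  if i ∈ s then (e i, 0) else (0, e i)

lemma MultilinearMap.map_graph_eq_sum_mixedFrame [Fintype ι] [Module ℝ E]
    (ω : MultilinearMap ℝ (fun _ : ι => E × E) ℝ) (e : ι → E) (l : ι → ℝ) :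
    ω (fun i => (e i, l i • e i)) = ∑ s, (∏ i ∈ sᶜ, l i) * ω (mixedFrame e s) := by
  have hsplit : (fun i => (e i, l i • e i)) = (fun i => (e i, 0)) + fun i => (0, l i • e i) := by
    ext i <;> simp
  rw [hsplit, ω.map_add_univ]
  refine sum_congr rfl fun s _ => ?_
  have hpiece : s.piecewise (fun i => (e i, 0)) (fun i => (0, l i • e i))
      = fun i => s.piecewise (fun _ => 1) l i • mixedFrame e s i := by
    ext i <;> by_cases hi : i ∈ s <;> simp [hi, mixedFrame]
  rw [hpiece, ω.map_smul_univ, smul_eq_mul, prod_piecewise]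
  simp [compl_eq_univ_sdiff]

lemma mixedFrame_comp_perm (e : ι → E) (s : Finset ι) (σ : Equiv.Perm ι) :
    mixedFrame (e ∘ σ.symm) (s.map σ.toEmbedding) = mixedFrame e s ∘ σ.symm := by
  ext i <;> simp [mixedFrame]

lemma mixedFrame_update_neg (e : ι → E) (s : Finset ι) (j : ι) :
    mixedFrame (Function.update e j (-e j)) s
      = Function.update (mixedFrame e s) j (-mixedFrame e s j) := by
  ext i <;> rcases eq_or_ne i j with rfl | hij <;> by_cases hs : i ∈ s <;> simp [mixedFrame, *]

lemma AlternatingMap.apply_mixedFrame_update_neg [Module ℝ E] (ω : (E × E) [⋀^ι]→ₗ[ℝ] ℝ)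
    (e : ι → E) (s : Finset ι) (j : ι) :
    ω (mixedFrame (Function.update e j (-e j)) s) = -ω (mixedFrame e s) := by
  rw [mixedFrame_update_neg, ω.map_update_neg, Function.update_eq_self]

lemma mixedFrame_filter_val_lt {n : ℕ} (e : Fin n → E) (m : ℕ) :
    mixedFrame e {i | (i : ℕ) < m} =
      fun i : Fin n => if (i : ℕ) < m then (e i, 0) else (0, e i) := by
  ext i <;> simp [mixedFrame]

end MixedFrame

lemma BidegreeForm.form_mixedFrame_eq_zero {n k : ℕ} (τ : BidegreeForm n k) (p : En n × En n)
    {e : Fin n → En n} (he : ∀ i, e i ≠ 0) {s : Finset (Fin n)} (hs : #s ≠ n - k) :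
    τ.form p (mixedFrame e s) = 0 := by
  have hsnd : univ.filter (fun i => (mixedFrame e s i).2 = 0) = s := by
    ext i; rw [Finset.mem_filter]; by_cases hi : i ∈ s <;> simp [mixedFrame, hi, he i]
  have hfst : univ.filter (fun i => (mixedFrame e s i).1 = 0) = sᶜ := by
    ext i; rw [Finset.mem_filter]; by_cases hi : i ∈ s <;> simp [mixedFrame, hi, he i]
  rcases lt_or_gt_of_ne hs with hlt | hgt
  · apply τ.vanish_snd
    rw [hfst, card_compl, Fintype.card_fin]
    omega
  · apply τ.vanish_fst
    rw [hsnd]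
    omega

section EuclideanDet

variable {ι : Type*} [Fintype ι] [DecidableEq ι]

lemma EuclideanSpace.basisFun_toBasis_det_apply (e : ι → EuclideanSpace ℝ ι) :
    (EuclideanSpace.basisFun ι ℝ).toBasis.det e = det (of fun i j => e j i) := by
  rw [Module.Basis.det_apply]
  rfl

lemma AlternatingMap.apply_eq_det_mul_apply_single (ω : EuclideanSpace ℝ ι [⋀^ι]→ₗ[ℝ] ℝ)
    (e : ι → EuclideanSpace ℝ ι) :
    ω e = det (of fun i j => e j i) * ω fun i => EuclideanSpace.single i 1 := by
  conv_lhs => rw [ω.eq_smul_basis_det (EuclideanSpace.basisFun ι ℝ).toBasis]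
  rw [AlternatingMap.smul_apply, EuclideanSpace.basisFun_toBasis_det_apply, smul_eq_mul, mul_comm]
  congr 2
  ext i
  simp

lemma Orthonormal.det_eq_one_or_eq_neg_one {e : ι → EuclideanSpace ℝ ι} (he : Orthonormal ℝ e) :
    det (of fun i j => e j i) = 1 ∨ det (of fun i j => e j i) = -1 := by
  have hspan := he.linearIndependent.span_eq_top_of_card_eq_finrank' (by simp)
  have := (EuclideanSpace.basisFun ι ℝ).det_to_matrix_orthonormalBasis_real
    (OrthonormalBasis.mk he hspan.ge)
  rwa [OrthonormalBasis.coe_mk, EuclideanSpace.basisFun_toBasis_det_apply] at this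

lemma det_of_update_neg (e : ι → EuclideanSpace ℝ ι) (j : ι) :
    det (of fun i l => Function.update e j (-e j) l i) = -det (of fun i l => e l i) := by
  have hcol : (of fun i l => Function.update e j (-e j) l i)
      = (of fun i l => e l i).updateCol j ((-1 : ℝ) • fun i => (of fun i l => e l i) i j) := by
    ext i l
    rcases eq_or_ne l j with rfl | hl <;> simp [*]
  rw [hcol, det_updateCol_smul, updateCol_eq_self]
  ring

lemma det_of_comp_perm (e : ι → EuclideanSpace ℝ ι) (σ : Equiv.Perm ι) :
    det (of fun i j => (e ∘ σ) j i) = Equiv.Perm.sign σ * det (of fun i j => e j i) :=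
  det_permute' σ (of fun i j => e j i)

variable (ω : (EuclideanSpace ℝ ι × EuclideanSpace ℝ ι) [⋀^ι]→ₗ[ℝ] ℝ)

lemma AlternatingMap.det_mul_apply_mixedFrame_comp_perm (e : ι → EuclideanSpace ℝ ι)
    (s : Finset ι) (σ : Equiv.Perm ι) :
    det (of fun i j => (e ∘ σ.symm) j i) * ω (mixedFrame (e ∘ σ.symm) (s.map σ.toEmbedding))
      = det (of fun i j => e j i) * ω (mixedFrame e s) := by
  rw [mixedFrame_comp_perm, ω.map_perm, det_of_comp_perm, Units.smul_def]
  rcases Int.units_eq_one_or (Equiv.Perm.sign σ.symm) with h | h <;> simp [h]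

lemma AlternatingMap.det_mul_apply_mixedFrame_nonneg {s₀ : Finset ι}
    (hω : ∀ e : ι → EuclideanSpace ℝ ι, Orthonormal ℝ e → det (of fun i j => e j i) = 1 →
      0 ≤ ω (mixedFrame e s₀))
    {e : ι → EuclideanSpace ℝ ι} (he : Orthonormal ℝ e) {s : Finset ι} (hs : #s = #s₀) :
    0 ≤ det (of fun i j => e j i) * ω (mixedFrame e s) := by
  obtain ⟨σ, hσ⟩ := Equiv.Perm.exists_map_finset_eq s s₀ hs
  rw [← ω.det_mul_apply_mixedFrame_comp_perm e s σ, hσ]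
  have he' : Orthonormal ℝ (e ∘ σ.symm) := he.comp σ.symm σ.symm.injective
  rcases he'.det_eq_one_or_eq_neg_one with h | h
  · rw [h, one_mul]
    exact hω _ he' h
  · obtain ⟨j⟩ : Nonempty ι := by
      by_contra hι
      rw [not_nonempty_iff] at hι
      norm_num [det_isEmpty] at h
    set e' := e ∘ σ.symm
    have he'' : Orthonormal ℝ (Function.update e' j (-e' j)) :=
      he'.orthonormal_of_forall_eq_or_eq_neg fun i => by
        rcases eq_or_ne i j with rfl | hi <;> simp [*]
    have := hω _ he'' (by rw [det_of_update_neg, h, neg_neg])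
    rw [ω.apply_mixedFrame_update_neg] at this
    rw [h]
    linarith

end EuclideanDet

lemma BidegreeForm.form_graph_eq_det_mul_sum {n k : ℕ} (τ : BidegreeForm n k) (p : En n × En n)
    (H : En n →L[ℝ] En n) {e : Fin n → En n} (he : Orthonormal ℝ e) {l : Fin n → ℝ}
    (hH : ∀ i, H (e i) = l i • e i) :
    τ.form p (fun i => (EuclideanSpace.single i 1, H (EuclideanSpace.single i 1)))
      = det (of fun i j => e j i) *
        ∑ s ∈ powersetCard (n - k) univ, (∏ i ∈ sᶜ, l i) * τ.form p (mixedFrame e s) := by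
  have hchange : τ.form p (fun i => (e i, l i • e i)) = det (of fun i j => e j i) *
      τ.form p (fun i => (EuclideanSpace.single i 1, H (EuclideanSpace.single i 1))) := by
    simpa [hH] using ((τ.form p).compLinearMap (LinearMap.id.prod H.toLinearMap))
      |>.apply_eq_det_mul_apply_single e
  rw [← AlternatingMap.coe_multilinearMap,
    (τ.form p).toMultilinearMap.map_graph_eq_sum_mixedFrame] at hchange
  simp only [AlternatingMap.coe_multilinearMap] at hchange
  have hsum : ∑ s, (∏ i ∈ sᶜ, l i) * τ.form p (mixedFrame e s)
      = ∑ s ∈ powersetCard (n - k) univ, (∏ i ∈ sᶜ, l i) * τ.form p (mixedFrame e s) := by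
    refine (sum_subset (subset_univ _) fun s _ hs => ?_).symm
    rw [τ.form_mixedFrame_eq_zero p he.ne_zero (by simpa using hs), mul_zero]
  rcases he.det_eq_one_or_eq_neg_one with h | h <;>
    · rw [h] at hchange ⊢
      linarith

lemma Finset.sum_powersetCard_prod_compl_ite_mem {α R : Type*} [Fintype α] [DecidableEq α]
    [CommSemiring R] (t : Finset α) (g : Finset α → R) :
    ∑ s ∈ powersetCard #t univ, (∏ i ∈ sᶜ, if i ∈ t then (0 : R) else 1) * g s = g t := by
  rw [sum_eq_single_of_mem t (mem_powersetCard.2 ⟨subset_univ t, rfl⟩)]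
  · rw [prod_eq_one fun i hi => if_neg (mem_compl.1 hi), one_mul]
  · intro s hs hne
    obtain ⟨i, hit, his⟩ : ∃ i ∈ t, i ∉ s := by
      by_contra! hts
      exact hne (eq_of_subset_of_card_le hts (mem_powersetCard.1 hs).2.le).symm
    rw [prod_eq_zero (mem_compl.2 his) (if_pos hit : (if i ∈ t then (0 : R) else 1) = 0),
      zero_mul]

lemma BidegreeForm.form_mixedFrame_nonneg_of_isPositiveForm {n k : ℕ} {τ : BidegreeForm n k}
    (hτ : IsPositiveForm τ) (x ξ : En n) {e : Fin n → En n} (he : Orthonormal ℝ e)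
    (hdet : det (of fun i j => e j i) = 1) :
    0 ≤ τ.form (x, ξ) (mixedFrame e {i | (i : ℕ) < n - k}) := by
  set s₀ : Finset (Fin n) := {i | (i : ℕ) < n - k}
  set f := testQuadratic x ξ s₀ᶜ e
  have hH : ∀ j, hess f x (e j) = (if j ∈ s₀ then (0 : ℝ) else 1) • e j := fun j => by
    rw [hess_testQuadratic, he.sum_inner_smul_eq_ite]
    by_cases hj : j ∈ s₀ <;> simp [hj]
  have h := hτ f (convexOn_testQuadratic ..) (contDiff_testQuadratic ..) x
  have hs₀ : n - k = #s₀ := by simp [s₀, Fin.card_filter_val_lt]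
  rwa [gradient_testQuadratic_self, show hess f x = ⇑(fderiv ℝ (gradient f) x) from rfl,
    τ.form_graph_eq_det_mul_sum _ _ he hH, hdet, one_mul, hs₀,
    sum_powersetCard_prod_compl_ite_mem] at h

lemma BidegreeForm.isPositiveForm_of_form_mixedFrame_nonneg {n k : ℕ} {τ : BidegreeForm n k}
    (hτ : ∀ (x ξ : En n) (e : Fin n → En n), Orthonormal ℝ e → det (of fun i j => e j i) = 1 →
      0 ≤ τ.form (x, ξ) (mixedFrame e {i | (i : ℕ) < n - k})) :
    IsPositiveForm τ := by
  intro f hconv hf x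
  set H := fderiv ℝ (gradient f) x
  have hH : (H : En n →ₗ[ℝ] En n).IsPositive := hconv.isPositive_fderiv_gradient hf x
  set b := hH.isSymmetric.eigenvectorBasis finrank_euclideanSpace_fin
  rw [show hess f x = ⇑H from rfl, τ.form_graph_eq_det_mul_sum _ H b.orthonormal
    (hH.isSymmetric.apply_eigenvectorBasis _), mul_sum]
  refine sum_nonneg fun s hs => ?_
  rw [mul_left_comm]
  refine mul_nonneg (prod_nonneg fun i _ => hH.nonneg_eigenvalues _ i) ?_
  exact (τ.form _).det_mul_apply_mixedFrame_nonneg (hτ x _) b.orthonormal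
    ((mem_powersetCard.1 hs).2.trans (by simp [Fin.card_filter_val_lt]))

theorem stmt17_general (n k : ℕ) (τ : BidegreeForm n k) :
    IsPositiveForm τ ↔
      ∀ (x ξ : En n) (e : Fin n → En n), Orthonormal ℝ e →
        Matrix.det (Matrix.of fun i j => e j i) = 1 →
        0 ≤ τ.form (x, ξ)
          (fun i => if (i : ℕ) < n - k then ((e i, 0) : En n × En n) else (0, e i)) := by
  constructor
  · intro hτ x ξ e he hdet
    rw [← mixedFrame_filter_val_lt]
    exact τ.form_mixedFrame_nonneg_of_isPositiveForm hτ x ξ he hdet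
  · intro hτ
    refine τ.isPositiveForm_of_form_mixedFrame_nonneg fun x ξ e he hdet => ?_
    rw [mixedFrame_filter_val_lt]
    exact hτ x ξ e he hdet

/-- A form of bidegree `(n-k,k)` is positive iff for every point
`(x,ξ)` and every positively oriented orthonormal basis `e_1,…,e_n` of `ℝⁿ` one has
`τ_{(x,ξ)}((e_1,0),…,(e_{n-k},0),(0,e_{n-k+1}),…,(0,e_n)) ≥ 0`. -/
theorem stmt17 (n k : ℕ) (hn : 1 ≤ n) (hk : k ≤ n) (τ : BidegreeForm n k) :
    IsPositiveForm τ ↔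
      ∀ (x ξ : En n) (e : Fin n → En n), Orthonormal ℝ e →
        Matrix.det (Matrix.of fun i j => e j i) = 1 →
        0 ≤ τ.form (x, ξ)
          (fun i => if (i : ℕ) < n - k then ((e i, 0) : En n × En n) else (0, e i)) :=
  stmt17_general n k τ
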